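/- arXiv:2006.07888 — 2 statements merged into one kernel-verified Lean document; each statement's English description precedes it below -/
import Mathlib

section
/- Let Y ⊆ ℂ^p be a nonempty open set. Suppose that for every n ≥ 1 and every special polyhedral pair K ⊆ L in ℂ^n (i.e., L is a compact convex polyhedron, the intersection of finitely many closed real affine half-spaces of ℂ^n ≅ ℝ^{2n}, and K = {z ∈ L : λ(z) ≤ 0} for some real affine function λ : ℂ^n → ℝ), every holomorphic map from an open neighbourhood of K with values in Y can be approximated uniformly on K by holomorphic maps defined on open neighbourhoods of L with values in Y. Then Y satisfies the convex approximation property (CAP). -/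
open Set

noncomputable section

abbrev ESp (n : ℕ) := EuclideanSpace ℂ (Fin n)

/-- The convex approximation property for an open set `Y ⊆ ℂ^p`. -/
def CAP {p : ℕ} (Y : Set (ESp p)) : Prop :=
  ∀ (m : ℕ), 1 ≤ m → ∀ L : Set (ESp m), IsCompact L → Convex ℝ L →
    ∀ U : Set (ESp m), IsOpen U → L ⊆ U →
      ∀ f : ESp m → ESp p, DifferentiableOn ℂ f U → f '' U ⊆ Y →
        ∀ ε : ℝ, 0 < ε →
          ∃ F : ESp m → ESp p, Differentiable ℂ F ∧ Set.range F ⊆ Y ∧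
            ∀ z ∈ L, ‖F z - f z‖ < ε

/-!
A compact convex set `L ⊆ U` lies in a convex polyhedron `P ⊆ U`: separate `L` by finitely many
half-spaces from a compact level set of the distance to `L`. Cutting a compact polyhedron by the
half-spaces of another polyhedron one at a time, the hypothesis lets us approximate maps that are
holomorphic near `P ∩ Q` by maps holomorphic near `P`. Exhausting `ℂ^m` by compact polyhedra
`Q₀ ⊆ Q₁ ⊆ ⋯`, we approximate successively, each time with an error small compared with the
distance from the image of `Qₖ` to the complement of `Y`. The maps converge locally uniformly to
an entire map with values in `Y`; it is holomorphic because, by Cauchy estimates, the derivatives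
converge as well.
-/

open Metric Filter Topology

section Polyhedron

variable {E : Type*} [NormedAddCommGroup E] [NormedSpace ℝ E]

def polyhedron {k : ℕ} (φ : Fin k → E →L[ℝ] ℝ) (c : Fin k → ℝ) : Set E :=
  {z | ∀ i, φ i z ≤ c i}

def IsPolyhedron (P : Set E) : Prop :=
  ∃ (k : ℕ) (φ : Fin k → E →L[ℝ] ℝ) (c : Fin k → ℝ), P = polyhedron φ c

lemma isClosed_polyhedron {k : ℕ} (φ : Fin k → E →L[ℝ] ℝ) (c : Fin k → ℝ) :
    IsClosed (polyhedron φ c) := by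
  simp only [polyhedron, ofPred_forall]
  exact isClosed_iInter fun i => isClosed_le (φ i).continuous continuous_const

lemma convex_polyhedron {k : ℕ} (φ : Fin k → E →L[ℝ] ℝ) (c : Fin k → ℝ) :
    Convex ℝ (polyhedron φ c) := by
  simp only [polyhedron, ofPred_forall]
  exact convex_iInter fun i => convex_halfSpace_le (φ i).isLinear (c i)

lemma polyhedron_zero (φ : Fin 0 → E →L[ℝ] ℝ) (c : Fin 0 → ℝ) : polyhedron φ c = univ := by
  simp [polyhedron]

lemma polyhedron_succ {k : ℕ} (φ : Fin (k + 1) → E →L[ℝ] ℝ) (c : Fin (k + 1) → ℝ) :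
    polyhedron φ c = polyhedron (Fin.tail φ) (Fin.tail c) ∩ {z | φ 0 z + -c 0 ≤ 0} := by
  ext z
  simp [polyhedron, Fin.forall_fin_succ, Fin.tail, and_comm]

lemma polyhedron_append {k l : ℕ} (φ : Fin k → E →L[ℝ] ℝ) (c : Fin k → ℝ)
    (ψ : Fin l → E →L[ℝ] ℝ) (d : Fin l → ℝ) :
    polyhedron (Fin.append φ ψ) (Fin.append c d) = polyhedron φ c ∩ polyhedron ψ d := by
  ext z
  simp [polyhedron, Fin.forall_fin_add]

namespace IsPolyhedron

lemma isClosed {P : Set E} (hP : IsPolyhedron P) : IsClosed P := by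
  obtain ⟨k, φ, c, rfl⟩ := hP
  exact isClosed_polyhedron φ c

lemma convex {P : Set E} (hP : IsPolyhedron P) : Convex ℝ P := by
  obtain ⟨k, φ, c, rfl⟩ := hP
  exact convex_polyhedron φ c

lemma inter {P Q : Set E} (hP : IsPolyhedron P) (hQ : IsPolyhedron Q) : IsPolyhedron (P ∩ Q) := by
  obtain ⟨k, φ, c, rfl⟩ := hP
  obtain ⟨l, ψ, d, rfl⟩ := hQ
  exact ⟨k + l, Fin.append φ ψ, Fin.append c d, (polyhedron_append φ c ψ d).symm⟩

end IsPolyhedron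

lemma isPolyhedron_empty : IsPolyhedron (∅ : Set E) :=
  ⟨1, 0, -1, by ext; simp [polyhedron]⟩

lemma exists_isPolyhedron_superset_disjoint {L S : Set E} (hL : IsClosed L) (hLc : Convex ℝ L)
    (hS : IsCompact S) (hLS : Disjoint L S) : ∃ P, IsPolyhedron P ∧ L ⊆ P ∧ Disjoint P S := by
  choose! f u hfL hfS using fun x (hx : x ∈ S) =>
    geometric_hahn_banach_closed_point hLc hL (hLS.notMem_of_mem_right hx)
  obtain ⟨T, hTS, hT, hST⟩ := hS.elim_finite_subcover_image
    (fun x _ => isOpen_lt continuous_const (f x).continuous) fun x hx => mem_biUnion hx (hfS x hx)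
  obtain ⟨k, σ, -, rfl⟩ := hT.fin_param
  refine ⟨_, ⟨k, f ∘ σ, u ∘ σ, rfl⟩, fun a ha i => (hfL _ (hTS ⟨i, rfl⟩) a ha).le, ?_⟩
  refine disjoint_left.mpr fun y hyP hyS => ?_
  obtain ⟨_, ⟨i, rfl⟩, hy⟩ := mem_iUnion₂.mp (hST hyS)
  exact (hyP i).not_gt hy

variable [ProperSpace E]

lemma exists_isPolyhedron_between {L U : Set E} (hL : IsCompact L) (hLc : Convex ℝ L)
    (hU : IsOpen U) (hLU : L ⊆ U) : ∃ P, IsPolyhedron P ∧ L ⊆ P ∧ P ⊆ U := by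
  rcases L.eq_empty_or_nonempty with rfl | ⟨x, hx⟩
  · exact ⟨∅, isPolyhedron_empty, subset_rfl, empty_subset U⟩
  obtain ⟨δ, hδ, hδU⟩ := hL.exists_thickening_subset_open hU hLU
  -- `P` separates `L` from the level set `S` of the distance to `L`; being convex, it cannot
  -- reach the complement of `U` without crossing `S`.
  set S := {y | infDist y L = δ / 2}
  have hS : IsCompact S := by
    refine isCompact_of_isClosed_isBounded
      (isClosed_eq (continuous_infDist_pt L) continuous_const)
      (isBounded_closedBall (x := x) (r := δ / 2 + diam L) |>.subset fun y hy => ?_)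
    exact (dist_le_infDist_add_diam hL.isBounded hx).trans_eq
      (by rw [show infDist y L = δ / 2 from hy])
  have hLS : Disjoint L S := disjoint_left.mpr fun y hy hyS => by
    simp only [S, mem_ofPred_eq, infDist_zero_of_mem hy] at hyS
    linarith
  obtain ⟨P, hP, hLP, hPS⟩ := exists_isPolyhedron_superset_disjoint hL.isClosed hLc hS hLS
  refine ⟨P, hP, hLP, fun w hwP => by_contra fun hwU => ?_⟩
  have hw : δ ≤ infDist w L :=
    not_lt.mp fun h => hwU (hδU ((mem_thickening_iff_infDist_lt ⟨x, hx⟩).mpr h))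
  obtain ⟨y, hyP, hyS⟩ := hP.convex.isPreconnected.intermediate_value (hLP hx) hwP
    (continuous_infDist_pt L).continuousOn
    (show δ / 2 ∈ Icc _ _ from ⟨by rw [infDist_zero_of_mem hx]; positivity, by linarith⟩)
  exact hPS.notMem_of_mem_left hyP hyS

lemma exists_isPolyhedron_exhaustion (R : ℝ) :
    ∃ Q : ℕ → Set E, (∀ j, IsPolyhedron (Q j) ∧ IsCompact (Q j)) ∧ Monotone Q ∧
      closedBall 0 R ⊆ Q 0 ∧ ∀ z, ∃ j, z ∈ interior (Q j) := by
  choose Q hQ hBQ hQB using fun j : ℕ => exists_isPolyhedron_between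
    (isCompact_closedBall (0 : E) (R + j)) (convex_closedBall 0 _) isOpen_ball
    (closedBall_subset_ball (lt_add_one (R + j)))
  refine ⟨Q, fun j => ⟨hQ j, isCompact_of_isClosed_isBounded (hQ j).isClosed
    (isBounded_ball.subset (hQB j))⟩, monotone_nat_of_le_succ fun j => ?_, by simpa using hBQ 0,
    fun z => ?_⟩
  · refine (hQB j).trans (ball_subset_closedBall.trans ((closedBall_subset_closedBall ?_).trans
      (hBQ (j + 1))))
    push_cast
    linarith
  · obtain ⟨j, hj⟩ := exists_nat_gt (‖z‖ - R)
    exact ⟨j, interior_maximal (ball_subset_closedBall.trans (hBQ j)) isOpen_ball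
      (mem_ball_zero_iff.mpr (by linarith))⟩

end Polyhedron

section Approximation

variable {E F : Type*} [NormedAddCommGroup E] [NormedSpace ℂ E] [NormedAddCommGroup F]
  [NormedSpace ℂ F]

/-- Holomorphic maps into `Y` near `K` are uniform limits on `K` of holomorphic maps into `Y`
near `L`. -/
def ApproxPair (Y : Set F) (K L : Set E) : Prop :=
  ∀ U : Set E, IsOpen U → K ⊆ U →
    ∀ f : E → F, DifferentiableOn ℂ f U → f '' U ⊆ Y →
      ∀ ε : ℝ, 0 < ε →
        ∃ (W : Set E) (g : E → F), IsOpen W ∧ L ⊆ W ∧ DifferentiableOn ℂ g W ∧ g '' W ⊆ Y ∧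
          ∀ z ∈ K, ‖g z - f z‖ < ε

namespace ApproxPair

variable {Y : Set F}

lemma refl (K : Set E) : ApproxPair Y K K :=
  fun U hU hKU f hf hfY _ hε => ⟨U, f, hU, hKU, hf, hfY, fun z _ => by simpa using hε⟩

lemma trans {K L M : Set E} (hKL : ApproxPair Y K L) (hLM : ApproxPair Y L M) (hK : K ⊆ L) :
    ApproxPair Y K M := by
  intro U hU hKU f hf hfY ε hε
  obtain ⟨W, g, hW, hLW, hg, hgY, hgf⟩ := hKL U hU hKU f hf hfY (ε / 2) (half_pos hε)
  obtain ⟨W', h, hW', hMW', hh, hhY, hhg⟩ := hLM W hW hLW g hg hgY (ε / 2) (half_pos hε)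
  refine ⟨W', h, hW', hMW', hh, hhY, fun z hz => ?_⟩
  calc ‖h z - f z‖ ≤ ‖h z - g z‖ + ‖g z - f z‖ := norm_sub_le_norm_sub_add_norm_sub _ _ _
    _ < ε / 2 + ε / 2 := add_lt_add (hhg z (hK hz)) (hgf z hz)
    _ = ε := add_halves ε

end ApproxPair

lemma approxPair_inter_of_isPolyhedron [NormedSpace ℝ E] {Y : Set F}
    (hY : ∀ P : Set E, IsPolyhedron P → IsCompact P → ∀ (ψ : E →L[ℝ] ℝ) (d : ℝ),
      ApproxPair Y (P ∩ {z | ψ z + d ≤ 0}) P)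
    {P Q : Set E} (hP : IsPolyhedron P) (hPc : IsCompact P) (hQ : IsPolyhedron Q) :
    ApproxPair Y (P ∩ Q) P := by
  obtain ⟨k, φ, c, rfl⟩ := hQ
  induction k generalizing P with
  | zero => simpa [polyhedron_zero] using ApproxPair.refl P
  | succ k ih =>
    rw [polyhedron_succ, ← inter_assoc]
    have hP' : IsPolyhedron (P ∩ polyhedron (Fin.tail φ) (Fin.tail c)) := hP.inter ⟨_, _, _, rfl⟩
    exact (hY _ hP' (hPc.inter_right (isClosed_polyhedron _ _)) (φ 0) (-c 0)).trans
      (ih hP hPc _ _) inter_subset_left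

end Approximation

lemma exists_tendstoUniformlyOn_of_dist_le_geometric {X F : Type*} [PseudoMetricSpace F]
    [CompleteSpace F] {K : ℕ → Set X} (hK : Monotone K) (hcover : ∀ z, ∃ k, z ∈ K k)
    {g : ℕ → X → F} {δ : ℕ → ℝ} (hδ : ∀ k, δ (k + 1) ≤ δ k / 2)
    (hg : ∀ k, ∀ z ∈ K k, dist (g k z) (g (k + 1) z) ≤ δ k) :
    ∃ G : X → F, ∀ k, TendstoUniformlyOn (fun n => g (k + n)) G atTop (K k) ∧
      ∀ z ∈ K k, dist (g k z) (G z) ≤ 2 * δ k := by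
  have hδn : ∀ k n, δ (k + n) ≤ 2 * δ k / 2 / 2 ^ n := by
    intro k n
    induction n with
    | zero => simp
    | succ n ih =>
      calc δ (k + (n + 1)) ≤ δ (k + n) / 2 := hδ (k + n)
        _ ≤ 2 * δ k / 2 / 2 ^ n / 2 := by gcongr
        _ = 2 * δ k / 2 / 2 ^ (n + 1) := by rw [pow_succ, div_div]
  have hgeom : ∀ k, ∀ z ∈ K k, ∀ n,
      dist (g (k + n) z) (g (k + n + 1) z) ≤ 2 * δ k / 2 / 2 ^ n := fun k z hz n =>
    (hg (k + n) z (hK (Nat.le_add_right k n) hz)).trans (hδn k n)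
  have hlim : ∀ z, ∃ l, Tendsto (fun j => g j z) atTop (𝓝 l) := by
    intro z
    obtain ⟨k, hz⟩ := hcover z
    obtain ⟨l, hl⟩ := cauchySeq_tendsto_of_complete (cauchySeq_of_le_geometric_two (hgeom k z hz))
    exact ⟨l, (tendsto_add_atTop_iff_nat k).mp (hl.congr fun n => by rw [Nat.add_comm])⟩
  choose G hG using hlim
  have hshift : ∀ k z, Tendsto (fun n => g (k + n) z) atTop (𝓝 (G z)) := fun k z =>
    (hG z).comp (tendsto_atTop_mono (fun n => Nat.le_add_left n k) tendsto_id)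
  refine ⟨G, fun k => ⟨?_, fun z hz =>
    dist_le_of_le_geometric_two_of_tendsto₀ (hgeom k z hz) (hshift k z)⟩⟩
  have hbound : Tendsto (fun n : ℕ => 2 * δ k * (2⁻¹ : ℝ) ^ n) atTop (𝓝 0) := by
    simpa using (tendsto_pow_atTop_nhds_zero_of_lt_one (r := (2⁻¹ : ℝ)) (by norm_num)
      (by norm_num)).const_mul (2 * δ k)
  rw [Metric.tendstoUniformlyOn_iff]
  intro ε hε
  filter_upwards [hbound.eventually (gt_mem_nhds hε)] with n hn z hz
  rw [dist_comm]
  calc dist (g (k + n) z) (G z) ≤ 2 * δ k / 2 ^ n :=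
        dist_le_of_le_geometric_two_of_tendsto (hgeom k z hz) (hshift k z) n
    _ = 2 * δ k * (2⁻¹ : ℝ) ^ n := by rw [inv_pow, div_eq_mul_inv]
    _ < ε := hn

section Holomorphic

variable {E F : Type*} [NormedAddCommGroup E] [NormedSpace ℂ E] [NormedAddCommGroup F]
  [NormedSpace ℂ F]

lemma norm_fderiv_le_of_forall_mem_ball_norm_le {h : E → F} {z : E} {r M : ℝ}
    (hh : DifferentiableOn ℂ h (ball z r)) (hr : 0 < r) (hM : ∀ w ∈ ball z r, ‖h w‖ ≤ M) :
    ‖fderiv ℂ h z‖ ≤ 2 * M / r := by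
  refine Complex.norm_fderiv_le_div_of_mapsTo_ball hh (fun w hw => ?_) hr
  rw [mem_closedBall_iff_norm, two_mul]
  exact (norm_sub_le _ _).trans (add_le_add (hM w hw) (hM z (mem_ball_self hr)))

theorem TendstoUniformlyOn.differentiableOn [CompleteSpace F] {g : ℕ → E → F}
    {G : E → F} {V : Set E} (hG : TendstoUniformlyOn g G atTop V)
    (hg : ∀ n, DifferentiableOn ℂ (g n) V) (hV : IsOpen V) : DifferentiableOn ℂ G V := by
  intro z₀ hz₀
  obtain ⟨r, hr, hrV⟩ := Metric.isOpen_iff.mp hV z₀ hz₀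
  have hball : ∀ z ∈ ball z₀ (r / 2), ball z (r / 2) ⊆ V := fun z hz =>
    (ball_subset_ball' (by linarith [mem_ball.mp hz])).trans hrV
  have hBV : ball z₀ (r / 2) ⊆ V := hball z₀ (mem_ball_self (half_pos hr))
  -- Cauchy estimates turn uniform convergence of the `g n` into that of their derivatives.
  have hderiv : UniformCauchySeqOn (fun n => fderiv ℂ (g n)) atTop (ball z₀ (r / 2)) := by
    rw [Metric.uniformCauchySeqOn_iff]
    intro ε hε
    obtain ⟨N, hN⟩ :=
      Metric.uniformCauchySeqOn_iff.mp hG.uniformCauchySeqOn (ε * r / 8) (by positivity)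
    refine ⟨N, fun m hm n hn z hz => ?_⟩
    have hdiff : ∀ k, DifferentiableAt ℂ (g k) z := fun k =>
      (hg k).differentiableAt (hV.mem_nhds (hBV hz))
    rw [dist_eq_norm, ← fderiv_sub (hdiff m) (hdiff n)]
    calc ‖fderiv ℂ (fun w => g m w - g n w) z‖ ≤ 2 * (ε * r / 8) / (r / 2) :=
          norm_fderiv_le_of_forall_mem_ball_norm_le (((hg m).sub (hg n)).mono (hball z hz))
            (half_pos hr) fun w hw => by
              rw [← dist_eq_norm]; exact (hN m hm n hn w (hball z hz hw)).le
      _ < ε := by field_simp; linarith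
  have hG' : ∀ z ∈ ball z₀ (r / 2), Tendsto (fun n => fderiv ℂ (g n) z) atTop
      (𝓝 (limUnder atTop fun n => fderiv ℂ (g n) z)) := fun z hz =>
    (hderiv.cauchySeq hz).tendsto_limUnder
  exact (hasFDerivAt_of_tendstoUniformlyOn isOpen_ball (hderiv.tendstoUniformlyOn_of_tendsto hG')
    (fun n z hz => ((hg n).differentiableAt (hV.mem_nhds (hBV hz))).hasFDerivAt)
    (fun z hz => hG.tendsto_at (hBV hz)) (mem_ball_self (half_pos hr))).differentiableAt
    |>.differentiableWithinAt

end Holomorphic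

lemma exists_pos_forall_ball_subset {X F : Type*} [TopologicalSpace X] [PseudoMetricSpace F]
    {Y : Set F} (hY : IsOpen Y) {K : Set X} (hK : IsCompact K) {g : X → F}
    (hg : ContinuousOn g K) (hgY : g '' K ⊆ Y) :
    ∃ ρ > 0, ∀ z ∈ K, ball (g z) ρ ⊆ Y := by
  obtain ⟨ρ, hρ, hρY⟩ := (hK.image_of_continuousOn hg).exists_thickening_subset_open hY hgY
  exact ⟨ρ, hρ, fun z hz => (ball_subset_thickening (mem_image_of_mem g hz) ρ).trans hρY⟩

section Exhaustion

variable {E F : Type*} [NormedAddCommGroup E] [NormedSpace ℂ E] [NormedAddCommGroup F]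
  [NormedSpace ℂ F] {Y : Set F}

structure ApproxStage (Y : Set F) (K : Set E) where
  W : Set E
  g : E → F
  ρ : ℝ
  isOpen_W : IsOpen W
  subset_W : K ⊆ W
  differentiableOn : DifferentiableOn ℂ g W
  image_subset : g '' W ⊆ Y
  ρ_pos : 0 < ρ
  ball_subset : ∀ z ∈ K, ball (g z) ρ ⊆ Y

namespace ApproxStage

lemma exists_of_differentiableOn (hY : IsOpen Y) {K W : Set E} (hK : IsCompact K) (hW : IsOpen W)
    (hKW : K ⊆ W) {g : E → F} (hg : DifferentiableOn ℂ g W) (hgY : g '' W ⊆ Y) {ρ₀ : ℝ}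
    (hρ₀ : 0 < ρ₀) : ∃ s : ApproxStage Y K, s.g = g ∧ s.ρ ≤ ρ₀ := by
  obtain ⟨ρ, hρ, hρY⟩ := exists_pos_forall_ball_subset hY hK (hg.continuousOn.mono hKW)
    ((image_mono hKW).trans hgY)
  exact ⟨⟨W, g, min ρ ρ₀, hW, hKW, hg, hgY, lt_min hρ hρ₀,
    fun z hz => (ball_subset_ball (min_le_left _ _)).trans (hρY z hz)⟩, rfl, min_le_right _ _⟩

lemma exists_next (hY : IsOpen Y) {K K' : Set E} (s : ApproxStage Y K)
    (hKK' : ApproxPair Y K K') (hK' : IsCompact K') :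
    ∃ s' : ApproxStage Y K', s'.ρ ≤ s.ρ / 2 ∧ ∀ z ∈ K, dist (s.g z) (s'.g z) ≤ s.ρ / 4 := by
  obtain ⟨W, g, hW, hK'W, hg, hgY, hgs⟩ := hKK' s.W s.isOpen_W s.subset_W s.g s.differentiableOn
    s.image_subset (s.ρ / 4) (by linarith [s.ρ_pos])
  obtain ⟨s', rfl, hs'⟩ := exists_of_differentiableOn hY hK' hW hK'W hg hgY (half_pos s.ρ_pos)
  exact ⟨s', hs', fun z hz => by rw [dist_comm, dist_eq_norm]; exact (hgs z hz).le⟩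

end ApproxStage

theorem approxPair_univ_of_exhaustion [CompleteSpace F] (hY : IsOpen Y) {K : ℕ → Set E}
    (hK : ∀ k, IsCompact (K k)) (hmono : Monotone K) (hcover : ∀ z, ∃ k, z ∈ interior (K k))
    (happ : ∀ k, ApproxPair Y (K k) (K (k + 1))) : ApproxPair Y (K 0) univ := by
  intro U hU hKU f hf hfY ε hε
  obtain ⟨s₀, hs₀f, hs₀ε⟩ := ApproxStage.exists_of_differentiableOn hY (hK 0) hU hKU hf hfY hε
  choose next hnext_ρ hnext_g using fun k (s : ApproxStage Y (K k)) =>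
    s.exists_next hY (happ k) (hK (k + 1))
  let s : (k : ℕ) → ApproxStage Y (K k) := fun k => Nat.rec s₀ next k
  -- Steps of size `ρₖ / 4` with `ρₖ₊₁ ≤ ρₖ / 2` keep the limit within `ρₖ / 2` of `gₖ` on `Kₖ`.
  obtain ⟨G, hG⟩ := exists_tendstoUniformlyOn_of_dist_le_geometric hmono
    (fun z => (hcover z).imp fun _ => (interior_subset ·)) (g := fun k => (s k).g)
    (δ := fun k => (s k).ρ / 4) (fun k => by linarith [hnext_ρ k (s k)])
    (fun k => hnext_g k (s k))
  refine ⟨univ, G, isOpen_univ, subset_rfl, fun z _ => ?_, ?_, fun z hz => ?_⟩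
  · obtain ⟨k, hk⟩ := hcover z
    have hG_diff : DifferentiableOn ℂ G (interior (K k)) :=
      ((hG k).1.mono interior_subset).differentiableOn (fun n => (s (k + n)).differentiableOn.mono
        (interior_subset.trans ((hmono (Nat.le_add_right k n)).trans (s (k + n)).subset_W)))
        isOpen_interior
    exact (hG_diff.differentiableAt (isOpen_interior.mem_nhds hk)).differentiableWithinAt
  · rintro _ ⟨z, -, rfl⟩
    obtain ⟨k, hk⟩ := hcover z
    have hdist := (hG k).2 z (interior_subset hk)
    exact (s k).ball_subset z (interior_subset hk) (mem_ball'.mpr (by linarith [(s k).ρ_pos]))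
  · have hdist : dist (f z) (G z) ≤ 2 * (s₀.ρ / 4) := hs₀f ▸ (hG 0).2 z hz
    rw [← dist_eq_norm, dist_comm]
    linarith [s₀.ρ_pos]

end Exhaustion

theorem cap_of_special_polyhedral_pairs_general (p : ℕ) (Y : Set (ESp p))
    (hYo : IsOpen Y)
    (happrox : ∀ (n : ℕ), 1 ≤ n → ∀ (k : ℕ) (φ : Fin k → (ESp n →L[ℝ] ℝ)) (c : Fin k → ℝ),
      IsCompact {z : ESp n | ∀ i, φ i z ≤ c i} →
      ∀ (ψ : ESp n →L[ℝ] ℝ) (d : ℝ),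
        ∀ U : Set (ESp n), IsOpen U → {z : ESp n | (∀ i, φ i z ≤ c i) ∧ ψ z + d ≤ 0} ⊆ U →
          ∀ f : ESp n → ESp p, DifferentiableOn ℂ f U → f '' U ⊆ Y →
            ∀ ε : ℝ, 0 < ε →
              ∃ (W : Set (ESp n)) (g : ESp n → ESp p),
                IsOpen W ∧ {z : ESp n | ∀ i, φ i z ≤ c i} ⊆ W ∧
                DifferentiableOn ℂ g W ∧ g '' W ⊆ Y ∧
                ∀ z ∈ {z : ESp n | (∀ i, φ i z ≤ c i) ∧ ψ z + d ≤ 0}, ‖g z - f z‖ < ε) :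
    CAP Y := by
  intro m hm L hL hLc U hU hLU f hf hfY ε hε
  have hpairs : ∀ P : Set (ESp m), IsPolyhedron P → IsCompact P → ∀ (ψ : ESp m →L[ℝ] ℝ) (d : ℝ),
      ApproxPair Y (P ∩ {z | ψ z + d ≤ 0}) P := by
    rintro P ⟨k, φ, c, rfl⟩ hP ψ d
    exact happrox m hm k φ c hP ψ d
  obtain ⟨P, hP, hLP, hPU⟩ := exists_isPolyhedron_between hL hLc hU hLU
  obtain ⟨R, hLR⟩ := hL.isBounded.subset_closedBall 0
  obtain ⟨Q, hQ, hQmono, hRQ, hQcover⟩ := exists_isPolyhedron_exhaustion (E := ESp m) R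
  have hstep : ∀ k, ApproxPair Y (Q k) (Q (k + 1)) := fun k => by
    simpa [inter_eq_right.mpr (hQmono k.le_succ)] using
      approxPair_inter_of_isPolyhedron hpairs (hQ (k + 1)).1 (hQ (k + 1)).2 (hQ k).1
  have happ : ApproxPair Y (Q 0 ∩ P) univ :=
    (approxPair_inter_of_isPolyhedron hpairs (hQ 0).1 (hQ 0).2 hP).trans
      (approxPair_univ_of_exhaustion hYo (fun k => (hQ k).2) hQmono hQcover hstep)
      inter_subset_left
  obtain ⟨W, g, -, hW, hg, hgY, hgf⟩ :=
    happ U hU (inter_subset_right.trans hPU) f hf hfY ε hε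
  exact ⟨g, differentiableOn_univ.mp (hg.mono hW),
    range_subset_iff.mpr fun z => hgY ⟨z, hW trivial, rfl⟩,
    fun z hz => hgf z ⟨hRQ (hLR hz), hLP hz⟩⟩

/-- If holomorphic maps to `Y` can be approximated on each special polyhedral pair
`K ⊆ L` in `ℂ^n` (where `L = {z : ∀ i, φᵢ(z) ≤ cᵢ}` is a compact convex polyhedron and
`K = {z ∈ L : ψ(z) + d ≤ 0}` for a real affine function), then `Y` satisfies CAP. -/
theorem cap_of_special_polyhedral_pairs (p : ℕ) (Y : Set (ESp p))
    (hY : Y.Nonempty) (hYo : IsOpen Y)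
    (happrox : ∀ (n : ℕ), 1 ≤ n → ∀ (k : ℕ) (φ : Fin k → (ESp n →L[ℝ] ℝ)) (c : Fin k → ℝ),
      IsCompact {z : ESp n | ∀ i, φ i z ≤ c i} →
      ∀ (ψ : ESp n →L[ℝ] ℝ) (d : ℝ),
        ∀ U : Set (ESp n), IsOpen U → {z : ESp n | (∀ i, φ i z ≤ c i) ∧ ψ z + d ≤ 0} ⊆ U →
          ∀ f : ESp n → ESp p, DifferentiableOn ℂ f U → f '' U ⊆ Y →
            ∀ ε : ℝ, 0 < ε →
              ∃ (W : Set (ESp n)) (g : ESp n → ESp p),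
                IsOpen W ∧ {z : ESp n | ∀ i, φ i z ≤ c i} ⊆ W ∧
                DifferentiableOn ℂ g W ∧ g '' W ⊆ Y ∧
                ∀ z ∈ {z : ESp n | (∀ i, φ i z ≤ c i) ∧ ψ z + d ≤ 0}, ‖g z - f z‖ < ε) :
    CAP Y :=
  cap_of_special_polyhedral_pairs_general p Y hYo happrox
end
end

section
/- Let n ≥ 2 and k ≥ 1, let f₁,…,f_k : ℂ^{n−1} → ℂ be holomorphic (e.g., polynomial) functions, and let E ⊆ ℂ^{n−1} × ℂ be a closed set whose one-dimensional Hausdorff measure is σ-finite (e.g., E is contained in the union of a compact connected set of finite length and a countable set). Suppose that E contains no point of the form (z′, 0) with f₁(z′) = ⋯ = f_k(z′) = 0. Then the set of parameters t = (t₁,…,t_k) ∈ ℂ^k such that the image of the map ψ_t : ℂ^{n−1} → ℂ^{n−1} × ℂ, ψ_t(z′) = (z′, Σ_{j=1}^k t_j f_j(z′)), is disjoint from E, is dense in ℂ^k. -/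
open Set MeasureTheory

noncomputable section

instance (n : ℕ) : MeasurableSpace (ESp n) := borel _
instance (n : ℕ) : BorelSpace (ESp n) := ⟨rfl⟩

/-! A parameter `t` is bad if the graph `z ↦ (z, ∑ tᵢ fᵢ z)` meets `E`; the bad parameters form a
Lebesgue-null set. Since `E` contains no point `(z, 0)` with all `fᵢ z = 0`, a bad `t` meets `E`
at a point where some `f_j` does not vanish. Freezing every coordinate of `t` except `t_j` at the
values `x`, the bad values of `t_j` lie in the image of `E ∩ {f_j ≠ 0}` under the holomorphic,
hence locally Lipschitz, map `(z, w) ↦ x_j + (w - ∑ xᵢ fᵢ z) / f_j z`. This image has Hausdorff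
dimension at most `1 < 2`, so it is Lebesgue-null in `ℂ`, and Fubini concludes. Closedness of `E`
makes the bad set σ-compact, hence measurable. -/

open Metric

theorem DifferentiableOn.locallyLipschitzOn {E F : Type*} [NormedAddCommGroup E]
    [NormedSpace ℂ E] [NormedAddCommGroup F] [NormedSpace ℂ F] {f : E → F} {U : Set E}
    (hU : IsOpen U) (hf : DifferentiableOn ℂ f U) : LocallyLipschitzOn U f := by
  intro x₀ hx₀
  have hnhds : U ∩ f ⁻¹' ball (f x₀) 1 ∈ nhds x₀ :=
    Filter.inter_mem (hU.mem_nhds hx₀) <|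
      (hf.continuousOn.continuousAt (hU.mem_nhds hx₀)).preimage_mem_nhds
        (ball_mem_nhds _ one_pos)
  obtain ⟨δ, hδ, hδsub⟩ := Metric.mem_nhds_iff.1 hnhds
  refine ⟨(4 / δ).toNNReal, ball x₀ (δ / 4),
    nhdsWithin_le_nhds (ball_mem_nhds _ (by positivity)), ?_⟩
  refine LipschitzOnWith.of_dist_le_mul fun y hy x hx => ?_
  rw [mem_ball] at hx hy
  have hball : ball x (δ / 2) ⊆ ball x₀ δ := ball_subset_ball' (by linarith)
  have hmaps : MapsTo f (ball x (δ / 2)) (closedBall (f x) 2) := fun z hz => by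
    have hz' := (hδsub (hball hz)).2
    have hx' := (hδsub (hball (mem_ball_self (by positivity)))).2
    rw [mem_preimage, mem_ball] at hz' hx'
    rw [mem_closedBall]
    linarith [dist_triangle_right (f z) (f x) (f x₀)]
  have hyx : y ∈ ball x (δ / 2) := by
    rw [mem_ball]; linarith [dist_triangle_right y x x₀]
  refine (Complex.dist_le_div_mul_dist_of_mapsTo_ball
    (hf.mono fun z hz => (hδsub (hball hz)).1) hmaps hyx).trans_eq ?_
  rw [Real.coe_toNNReal _ (by positivity)]
  ring

theorem dimH_iUnion_le_of_hausdorffMeasure_lt_top {X ι : Type*} [EMetricSpace X]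
    [MeasurableSpace X] [BorelSpace X] [Countable ι] {T : ι → Set X} {d : NNReal}
    (hT : ∀ i, μH[d] (T i) < ⊤) : dimH (⋃ i, T i) ≤ d := by
  rw [dimH_iUnion]
  exact iSup_le fun i => dimH_le_of_hausdorffMeasure_ne_top (hT i).ne

theorem MeasureTheory.Measure.addHaar_eq_zero_of_dimH_lt_finrank {E : Type*}
    [NormedAddCommGroup E] [NormedSpace ℝ E] [FiniteDimensional ℝ E] [MeasurableSpace E]
    [BorelSpace E] (μ : Measure E) [μ.IsAddHaarMeasure] {s : Set E} (hs : dimH s < Module.finrank ℝ E) :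
    μ s = 0 :=
  measure_zero_of_dimH_lt (d := Module.finrank ℝ E)
    (by simpa using Measure.absolutelyContinuous_isAddHaarMeasure μ μH[Module.finrank ℝ E])
    (by simpa using hs)

theorem IsSigmaCompact.measurableSet {X : Type*} [TopologicalSpace X] [T2Space X]
    [MeasurableSpace X] [OpensMeasurableSpace X] {s : Set X} (hs : IsSigmaCompact s) :
    MeasurableSet s := by
  obtain ⟨K, hK, rfl⟩ := hs
  exact MeasurableSet.iUnion fun n => (hK n).isClosed.measurableSet

theorem IsClosed.isSigmaCompact_inter_isOpen {X : Type*} [TopologicalSpace X]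
    [LocallyCompactSpace X] [SecondCountableTopology X] {C U : Set X} (hC : IsClosed C)
    (hU : IsOpen U) : IsSigmaCompact (C ∩ U) := by
  rw [isSigmaCompact_iff_sigmaCompactSpace]
  have := (hC.isLocallyClosed.inter hU.isLocallyClosed).locallyCompactSpace
  infer_instance

theorem MeasureTheory.Measure.pi_eq_zero_of_forall_update_preimage {ι : Type*} [Fintype ι]
    [DecidableEq ι] {X : ι → Type*} [∀ i, MeasurableSpace (X i)] (μ : ∀ i, Measure (X i))
    [∀ i, SigmaFinite (μ i)] {s : Set (∀ i, X i)} (hs : MeasurableSet s) (j : ι)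
    (h : ∀ x, μ j (Function.update x j ⁻¹' s) = 0) : Measure.pi μ s = 0 := by
  obtain rfl | ⟨x, -⟩ := s.eq_empty_or_nonempty
  · exact measure_empty
  have hind : Measurable (s.indicator 1 : (∀ i, X i) → ENNReal) := measurable_one.indicator hs
  have hslice : ∫⋯∫⁻_{j}, s.indicator 1 ∂μ = 0 := by
    ext y
    rw [lmarginal_singleton, Pi.zero_apply, ← h y,
      ← lintegral_indicator_one (measurable_update y hs)]
    rfl
  rw [← lintegral_indicator_one hs, lintegral_eq_lmarginal_univ x,
    ← Finset.sdiff_union_of_subset (Finset.subset_univ {j}),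
    lmarginal_union _ _ hind Finset.sdiff_disjoint, hslice]
  simp [lmarginal]

theorem Fintype.sum_update_mul {ι R : Type*} [Fintype ι] [DecidableEq ι] [CommRing R]
    (x c : ι → R) (j : ι) (a : R) :
    ∑ i, Function.update x j a i * c i = ∑ i, x i * c i + (a - x j) * c j := by
  rw [← Finset.add_sum_erase _ _ (Finset.mem_univ j),
    ← Finset.add_sum_erase _ _ (Finset.mem_univ j),
    Finset.sum_congr rfl fun i hi =>
      by rw [Function.update_of_ne (Finset.ne_of_mem_erase hi)]]
  simp only [Function.update_self]
  ring

section

variable {ι V : Type*} [Fintype ι]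

def badParams (f : ι → V → ℂ) (E : Set (V × ℂ)) (j : ι) : Set (ι → ℂ) :=
  {t | ∃ z, f j z ≠ 0 ∧ (z, ∑ i, t i * f i z) ∈ E}

theorem update_preimage_badParams_subset [DecidableEq ι] (f : ι → V → ℂ) (E : Set (V × ℂ))
    (j : ι) (x : ι → ℂ) :
    Function.update x j ⁻¹' badParams f E j ⊆
      (fun p : V × ℂ => x j + (p.2 - ∑ i, x i * f i p.1) / f j p.1) ''
        (E ∩ {p | f j p.1 ≠ 0}) := by
  rintro a ⟨z, hz, hzE⟩
  refine ⟨_, ⟨hzE, hz⟩, ?_⟩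
  simp only [Fintype.sum_update_mul, add_sub_cancel_left, mul_div_cancel_right₀ _ hz]
  ring

theorem setOf_exists_mem_subset_iUnion_badParams {f : ι → V → ℂ} {E : Set (V × ℂ)}
    (hE0 : ∀ z, (∀ j, f j z = 0) → (z, (0 : ℂ)) ∉ E) :
    {t : ι → ℂ | ∃ z, (z, ∑ i, t i * f i z) ∈ E} ⊆ ⋃ j, badParams f E j := by
  rintro t ⟨z, hz⟩
  obtain ⟨j, hj⟩ : ∃ j, f j z ≠ 0 := by
    by_contra! h
    exact hE0 z h (by simpa [h] using hz)
  exact mem_iUnion.2 ⟨j, z, hj, hz⟩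

section

variable [NormedAddCommGroup V] [NormedSpace ℂ V] [FiniteDimensional ℂ V]

theorem volume_update_preimage_badParams [DecidableEq ι] {f : ι → V → ℂ}
    (hf : ∀ i, Differentiable ℂ (f i)) {E : Set (V × ℂ)} (hE : dimH E ≤ 1) (j : ι) (x : ι → ℂ) :
    volume (Function.update x j ⁻¹' badParams f E j) = 0 := by
  refine measure_mono_null (update_preimage_badParams_subset f E j x) ?_
  have hU : IsOpen {p : V × ℂ | f j p.1 ≠ 0} :=
    isOpen_ne_fun ((hf j).continuous.comp continuous_fst) continuous_const
  have hg : DifferentiableOn ℂ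
      (fun p : V × ℂ => x j + (p.2 - ∑ i, x i * f i p.1) / f j p.1)
      {p | f j p.1 ≠ 0} := by
    intro p hp
    have := fun i => (hf i).differentiableAt (x := p.1)
    exact DifferentiableAt.differentiableWithinAt (by fun_prop (disch := exact hp))
  refine Measure.addHaar_eq_zero_of_dimH_lt_finrank _ ?_
  calc dimH _ ≤ dimH (E ∩ {p : V × ℂ | f j p.1 ≠ 0}) :=
        dimH_image_le_of_locally_lipschitzOn
          ((hg.locallyLipschitzOn hU).mono inter_subset_right)
    _ ≤ 1 := (dimH_mono inter_subset_left).trans hE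
    _ < _ := by simp

theorem measurableSet_badParams {f : ι → V → ℂ}
    (hf : ∀ i, Differentiable ℂ (f i)) {E : Set (V × ℂ)} (hE : IsClosed E) (j : ι) :
    MeasurableSet (badParams f E j) := by
  have hΦ : Continuous fun q : (ι → ℂ) × V => (q.2, ∑ i, q.1 i * f i q.2) := by
    have := fun i => (hf i).continuous
    fun_prop
  have : badParams f E j = Prod.fst ''
      ((fun q : (ι → ℂ) × V => (q.2, ∑ i, q.1 i * f i q.2)) ⁻¹' E ∩ {q | f j q.2 ≠ 0}) := by
    ext t; simp [badParams, and_comm]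
  rw [this]
  exact ((hE.preimage hΦ).isSigmaCompact_inter_isOpen
    (isOpen_ne_fun ((hf j).continuous.comp continuous_snd) continuous_const)).image
      continuous_fst |>.measurableSet

theorem volume_badParams {f : ι → V → ℂ} (hf : ∀ i, Differentiable ℂ (f i))
    {E : Set (V × ℂ)} (hEc : IsClosed E) (hE : dimH E ≤ 1) (j : ι) :
    volume (badParams f E j) = 0 := by
  classical
  exact Measure.pi_eq_zero_of_forall_update_preimage _ (measurableSet_badParams hf hEc j) j
    (volume_update_preimage_badParams hf hE j)

theorem dense_params_avoiding_of_dimH_le_one {f : ι → V → ℂ} (hf : ∀ i, Differentiable ℂ (f i))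
    {E : Set (V × ℂ)} (hEc : IsClosed E) (hE : dimH E ≤ 1)
    (hE0 : ∀ z, (∀ j, f j z = 0) → (z, (0 : ℂ)) ∉ E) :
    Dense {t : ι → ℂ | ∀ z, (z, ∑ i, t i * f i z) ∉ E} := by
  have hnull : volume {t : ι → ℂ | ∃ z, (z, ∑ i, t i * f i z) ∈ E} = 0 :=
    measure_mono_null (setOf_exists_mem_subset_iUnion_badParams hE0)
      (measure_iUnion_null fun j => volume_badParams hf hEc hE j)
  exact Measure.dense_of_ae ((measure_eq_zero_iff_ae_notMem.1 hnull).mono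
    fun t ht z hz => ht ⟨z, hz⟩)

end

end

theorem dense_parameters_avoiding_thin_set_general (m k : ℕ)
    (f : Fin k → (ESp m → ℂ)) (hf : ∀ j, Differentiable ℂ (f j))
    (E : Set (ESp m × ℂ)) (hEcl : IsClosed E)
    (hEσ : ∃ T : ℕ → Set (ESp m × ℂ), E = ⋃ i, T i ∧
      ∀ i, MeasureTheory.Measure.hausdorffMeasure 1 (T i) < ⊤)
    (hE0 : ∀ z' : ESp m, (∀ j, f j z' = 0) → (z', (0:ℂ)) ∉ E) :
    Dense {t : ESp k | ∀ z' : ESp m, (z', ∑ j, t j * f j z') ∉ E} := by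
  obtain ⟨T, rfl, hT⟩ := hEσ
  have hdim : dimH (⋃ i, T i) ≤ 1 := by
    exact_mod_cast dimH_iUnion_le_of_hausdorffMeasure_lt_top (d := 1) (by simpa using hT)
  exact (dense_params_avoiding_of_dimH_le_one hf hEcl hdim hE0).preimage
    (EuclideanSpace.equiv (Fin k) ℂ).toHomeomorph.isOpenMap

/-- Transversality off a thin set: if `E ⊆ ℂ^{m} × ℂ` is closed with σ-finite
one-dimensional Hausdorff measure and contains no point `(z′,0)` with
`f₁(z′) = ⋯ = f_k(z′) = 0`, then the parameters `t ∈ ℂ^k` for which the graph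
`z′ ↦ (z′, Σ_j t_j f_j(z′))` avoids `E` are dense in `ℂ^k`. -/
theorem dense_parameters_avoiding_thin_set (m k : ℕ) (hm : 1 ≤ m) (hk : 1 ≤ k)
    (f : Fin k → (ESp m → ℂ)) (hf : ∀ j, Differentiable ℂ (f j))
    (E : Set (ESp m × ℂ)) (hEcl : IsClosed E)
    (hEσ : ∃ T : ℕ → Set (ESp m × ℂ), E = ⋃ i, T i ∧
      ∀ i, MeasureTheory.Measure.hausdorffMeasure 1 (T i) < ⊤)
    (hE0 : ∀ z' : ESp m, (∀ j, f j z' = 0) → (z', (0:ℂ)) ∉ E) :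
    Dense {t : ESp k | ∀ z' : ESp m, (z', ∑ j, t j * f j z') ∉ E} :=
  dense_parameters_avoiding_thin_set_general m k f hf E hEcl hEσ hE0
end
end
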